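/- arXiv:2510.12916 — 3 statements merged into one kernel-verified Lean document; each statement's English description precedes it below -/
import Mathlib

section
/- Let Z be a finite type, p a probability mass function on Z, h⋆, hψ : Z → ℝ strictly positive functions, and G : Z → ℝ nonnegative with ∑_z p(z) h⋆(z) G(z) > 0. Define p⋆(z) = p(z)h⋆(z)G(z) / ∑_{z'} p(z')h⋆(z')G(z') and pψ(z) = p(z)hψ(z)G(z) / ∑_{z'} p(z')hψ(z')G(z'). If |log h⋆(z) - log hψ(z)| ≤ ε for all z, then e^{-2ε} ≤ p⋆(z)/pψ(z) ≤ e^{2ε} for all z with p(z)G(z) > 0. -/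
lemma ratio_bound_of_log_close {a b ε : ℝ} (ha : 0 < a) (hb : 0 < b)
    (h : |Real.log a - Real.log b| ≤ ε) :
    Real.exp (-ε) ≤ a / b ∧ a / b ≤ Real.exp ε := by
  have hab : 0 < a / b := div_pos ha hb
  have hlog : Real.log (a / b) = Real.log a - Real.log b := Real.log_div ha.ne' hb.ne'
  have h1 : -ε ≤ Real.log (a / b) := by
    rw [hlog]; linarith [abs_le.mp h |>.1]
  have h2 : Real.log (a / b) ≤ ε := by
    rw [hlog]; linarith [abs_le.mp h |>.2]
  constructor
  · calc Real.exp (-ε) ≤ Real.exp (Real.log (a/b)) := Real.exp_le_exp.mpr h1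
      _ = a / b := Real.exp_log hab
  · calc a / b = Real.exp (Real.log (a/b)) := (Real.exp_log hab).symm
      _ ≤ Real.exp ε := Real.exp_le_exp.mpr h2

theorem twist_error_ratio_bound {Z : Type*} [Fintype Z]
    (p hstar hpsi G : Z → ℝ) (ε : ℝ) (hε : 0 ≤ ε)
    (hpnn : ∀ z, 0 ≤ p z) (hpsum : ∑ z, p z = 1)
    (hstar_pos : ∀ z, 0 < hstar z) (hpsi_pos : ∀ z, 0 < hpsi z)
    (hGnn : ∀ z, 0 ≤ G z)
    (hZstar : 0 < ∑ z, p z * hstar z * G z)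
    (hclose : ∀ z, |Real.log (hstar z) - Real.log (hpsi z)| ≤ ε) :
    ∀ z, 0 < p z * G z →
      Real.exp (-(2 * ε)) ≤
          (p z * hstar z * G z / ∑ z', p z' * hstar z' * G z') /
            (p z * hpsi z * G z / ∑ z', p z' * hpsi z' * G z') ∧
        (p z * hstar z * G z / ∑ z', p z' * hstar z' * G z') /
            (p z * hpsi z * G z / ∑ z', p z' * hpsi z' * G z') ≤ Real.exp (2 * ε) := by
  intro z hz
  set Sstar := ∑ z', p z' * hstar z' * G z' with hSstar
  set Spsi := ∑ z', p z' * hpsi z' * G z' with hSpsi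
  have hratio : ∀ w, Real.exp (-ε) ≤ hstar w / hpsi w ∧ hstar w / hpsi w ≤ Real.exp ε :=
    fun w => ratio_bound_of_log_close (hstar_pos w) (hpsi_pos w) (hclose w)
  -- termwise bounds
  have hub : ∀ w, hstar w ≤ Real.exp ε * hpsi w := fun w => by
    have := (hratio w).2
    rw [div_le_iff₀ (hpsi_pos w)] at this; linarith
  have hlb : ∀ w, Real.exp (-ε) * hpsi w ≤ hstar w := fun w => by
    have := (hratio w).1
    rw [le_div_iff₀ (hpsi_pos w)] at this; linarith
  have hSub : Sstar ≤ Real.exp ε * Spsi := by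
    rw [hSstar, hSpsi, Finset.mul_sum]
    apply Finset.sum_le_sum
    intro w _
    have := mul_le_mul_of_nonneg_right (hub w) (mul_nonneg (hpnn w) (hGnn w))
    nlinarith [hpnn w, hGnn w]
  have hSlb : Real.exp (-ε) * Spsi ≤ Sstar := by
    rw [hSstar, hSpsi, Finset.mul_sum]
    apply Finset.sum_le_sum
    intro w _
    have := mul_le_mul_of_nonneg_right (hlb w) (mul_nonneg (hpnn w) (hGnn w))
    nlinarith [hpnn w, hGnn w]
  have hSpsi_pos : 0 < Spsi := by
    have hexp : 0 < Real.exp (-ε) := Real.exp_pos _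
    nlinarith [hSlb, hZstar, Real.exp_pos ε, hSub]
  have hpz : 0 < p z := by
    rcases (hpnn z).lt_or_eq with h | h
    · exact h
    · exfalso; rw [← h] at hz; simp at hz
  have hGz : 0 < G z := by
    rcases (hGnn z).lt_or_eq with h | h
    · exact h
    · exfalso; rw [← h] at hz; simp at hz
  have hnum_pos : 0 < p z * hstar z * G z := mul_pos (mul_pos hpz (hstar_pos z)) hGz
  have hden_pos : 0 < p z * hpsi z * G z := mul_pos (mul_pos hpz (hpsi_pos z)) hGz
  have hS1ne : Sstar ≠ 0 := hZstar.ne'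
  have hS2ne : Spsi ≠ 0 := hSpsi_pos.ne'
  have hpne : p z ≠ 0 := hpz.ne'
  have hGne : G z ≠ 0 := hGz.ne'
  have hhne : hpsi z ≠ 0 := (hpsi_pos z).ne'
  have key : (p z * hstar z * G z / Sstar) / (p z * hpsi z * G z / Spsi)
      = (hstar z / hpsi z) * (Spsi / Sstar) := by
    field_simp
  rw [key]
  have hS1 : Real.exp (-ε) ≤ Spsi / Sstar := by
    rw [le_div_iff₀ hZstar]
    calc Real.exp (-ε) * Sstar ≤ Real.exp (-ε) * (Real.exp ε * Spsi) := by
          have := Real.exp_pos (-ε); nlinarith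
      _ = Spsi := by rw [← mul_assoc, ← Real.exp_add]; simp
  have hS2 : Spsi / Sstar ≤ Real.exp ε := by
    rw [div_le_iff₀ hZstar]
    calc Spsi = Real.exp ε * (Real.exp (-ε) * Spsi) := by
          rw [← mul_assoc, ← Real.exp_add]; simp
      _ ≤ Real.exp ε * Sstar := by
          have := Real.exp_pos ε; nlinarith
  have h1 := (hratio z).1
  have h2 := (hratio z).2
  have hexpn : 0 < Real.exp (-ε) := Real.exp_pos _
  constructor
  · have : Real.exp (-ε) * Real.exp (-ε) ≤ (hstar z / hpsi z) * (Spsi / Sstar) := by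
      apply mul_le_mul h1 hS1 hexpn.le (le_trans hexpn.le h1)
    calc Real.exp (-(2*ε)) = Real.exp (-ε) * Real.exp (-ε) := by
          rw [← Real.exp_add]; ring_nf
      _ ≤ _ := this
  · have hnn1 : 0 ≤ hstar z / hpsi z := le_trans hexpn.le h1
    have hnn2 : 0 ≤ Spsi / Sstar := le_trans hexpn.le hS1
    have : (hstar z / hpsi z) * (Spsi / Sstar) ≤ Real.exp ε * Real.exp ε :=
      mul_le_mul h2 hS2 hnn2 (Real.exp_pos ε).le
    calc _ ≤ Real.exp ε * Real.exp ε := this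
      _ = Real.exp (2*ε) := by rw [← Real.exp_add]; ring_nf
end

section
/- Let Z be a finite type, q a strictly positive probability mass function on Z, and p a probability mass function. Suppose the importance weight ratio decomposes as p(z)/q(z) = a(z)·b(z)·c(z) where |log a(z)| ≤ 2ε, |log b(z)| ≤ 2δ for all z, and ∑_z q(z) c(z)² ≤ 1 + CΔ². Then the effective sample size ESS = (∑_z q(z)(p(z)/q(z))²)^{-1} satisfies ESS ≥ exp(-4(ε+δ)) / (1 + CΔ²). -/
lemma sq_le_exp_of_abs_log_le {x t : ℝ} (h : |Real.log x| ≤ t) :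
    x ^ 2 ≤ Real.exp (2 * t) := by
  rcases eq_or_ne x 0 with hx | hx
  · simp [hx]
    positivity
  · have hxa : |x| = Real.exp (Real.log x) := by
      rw [← Real.log_abs, Real.exp_log (abs_pos.mpr hx)]
    have hle : |x| ≤ Real.exp t := by
      rw [hxa]; exact Real.exp_le_exp.mpr ((abs_le.mp h).2)
    calc x ^ 2 = |x| ^ 2 := (sq_abs x).symm
    _ ≤ (Real.exp t) ^ 2 := by
        exact pow_le_pow_left₀ (abs_nonneg x) hle 2
    _ = Real.exp (2 * t) := by
        rw [sq, ← Real.exp_add, two_mul]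

theorem ess_lower_bound {Z : Type*} [Fintype Z]
    (p q a b c : Z → ℝ) (ε δ C Δ : ℝ)
    (hε : 0 ≤ ε) (hδ : 0 ≤ δ) (hC : 0 ≤ C) (hΔ : 0 ≤ Δ)
    (hpnn : ∀ z, 0 ≤ p z) (hqpos : ∀ z, 0 < q z)
    (hpsum : ∑ z, p z = 1) (hqsum : ∑ z, q z = 1)
    (hdecomp : ∀ z, p z / q z = a z * b z * c z)
    (ha : ∀ z, |Real.log (a z)| ≤ 2 * ε)
    (hb : ∀ z, |Real.log (b z)| ≤ 2 * δ)
    (hc : ∑ z, q z * (c z) ^ 2 ≤ 1 + C * Δ ^ 2) :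
    Real.exp (-(4 * (ε + δ))) / (1 + C * Δ ^ 2)
      ≤ (∑ z, q z * (p z / q z) ^ 2)⁻¹ := by
  set S := ∑ z, q z * (p z / q z) ^ 2 with hS
  have hDen : (0:ℝ) < 1 + C * Δ ^ 2 := by positivity
  -- S positive
  have hz0 : ∃ z, 0 < p z := by
    by_contra h
    push_neg at h
    have : ∑ z, p z = 0 := Finset.sum_eq_zero fun z _ => le_antisymm (h z) (hpnn z)
    linarith
  obtain ⟨z0, hz0⟩ := hz0
  have hSpos : 0 < S := by
    have h1 : 0 < q z0 * (p z0 / q z0) ^ 2 := by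
      have := hqpos z0
      positivity
    have h2 : q z0 * (p z0 / q z0) ^ 2 ≤ S :=
      Finset.single_le_sum (fun z _ => mul_nonneg (hqpos z).le (sq_nonneg (p z / q z)))
        (Finset.mem_univ z0)
    linarith
  -- pointwise bound
  have hpt : ∀ z, q z * (p z / q z) ^ 2
      ≤ Real.exp (4 * (ε + δ)) * (q z * (c z) ^ 2) := by
    intro z
    have ha2 : (a z) ^ 2 ≤ Real.exp (2 * (2 * ε)) := sq_le_exp_of_abs_log_le (ha z)
    have hb2 : (b z) ^ 2 ≤ Real.exp (2 * (2 * δ)) := sq_le_exp_of_abs_log_le (hb z)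
    have hcsq : (0:ℝ) ≤ (c z) ^ 2 := sq_nonneg _
    have : (p z / q z) ^ 2 ≤ Real.exp (4 * (ε + δ)) * (c z) ^ 2 := by
      rw [hdecomp z, mul_pow, mul_pow]
      have h1 : (a z) ^ 2 * (b z) ^ 2 ≤ Real.exp (2 * (2 * ε)) * Real.exp (2 * (2 * δ)) := by
        apply mul_le_mul ha2 hb2 (sq_nonneg _) (Real.exp_pos _).le
      have h2 : Real.exp (2 * (2 * ε)) * Real.exp (2 * (2 * δ)) = Real.exp (4 * (ε + δ)) := by
        rw [← Real.exp_add]; ring_nf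
      calc (a z) ^ 2 * (b z) ^ 2 * (c z) ^ 2
          ≤ Real.exp (2 * (2 * ε)) * Real.exp (2 * (2 * δ)) * (c z) ^ 2 :=
            mul_le_mul_of_nonneg_right h1 hcsq
        _ = Real.exp (4 * (ε + δ)) * (c z) ^ 2 := by rw [h2]
    calc q z * (p z / q z) ^ 2
        ≤ q z * (Real.exp (4 * (ε + δ)) * (c z) ^ 2) :=
          mul_le_mul_of_nonneg_left this (hqpos z).le
      _ = Real.exp (4 * (ε + δ)) * (q z * (c z) ^ 2) := by ring
  have hSle : S ≤ Real.exp (4 * (ε + δ)) * (1 + C * Δ ^ 2) := by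
    calc S ≤ ∑ z, Real.exp (4 * (ε + δ)) * (q z * (c z) ^ 2) :=
          Finset.sum_le_sum fun z _ => hpt z
      _ = Real.exp (4 * (ε + δ)) * ∑ z, q z * (c z) ^ 2 := by
          rw [Finset.mul_sum]
      _ ≤ Real.exp (4 * (ε + δ)) * (1 + C * Δ ^ 2) :=
          mul_le_mul_of_nonneg_left hc (Real.exp_pos _).le
  have hinv : (Real.exp (4 * (ε + δ)) * (1 + C * Δ ^ 2))⁻¹ ≤ S⁻¹ :=
    inv_anti₀ hSpos hSle
  calc Real.exp (-(4 * (ε + δ))) / (1 + C * Δ ^ 2)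
      = (Real.exp (4 * (ε + δ)) * (1 + C * Δ ^ 2))⁻¹ := by
        rw [Real.exp_neg, mul_inv, div_eq_mul_inv]
    _ ≤ S⁻¹ := hinv
end

section
/- Let Z be a finite type, and for functions G₁, ..., G_K : Z → ℝ₊ and a probability measure P on paths represented as a probability mass function P on Z^{K} (the values at the potential times), define the tilted measure P⋆(z₁,...,z_K) ∝ ∏_k G_k(z_k) · P(z₁,...,z_K), assuming the normalizer is positive. Then for any 1 ≤ j ≤ K, the marginal of P⋆ on (z₁,...,z_j) is proportional to P(z₁,...,z_j) · (∏_{k≤j} G_k(z_k)) · h_j(z_j), where h_j(z_j) = E_P[∏_{k>j} G_k(Z_k) | Z_j = z_j] whenever the marginal P(z_j) > 0. -/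
open Classical in
/-- Marginalization identity for Feynman–Kac tilted path measures on a finite
state space: the marginal of the tilted measure on a prefix is proportional to the
prior prefix measure, tilted by the past potentials and the look-ahead function. -/
theorem feynman_kac_marginalization {Z : Type*} [Fintype Z] (K : ℕ)
    (G : Fin K → Z → ℝ) (P : (Fin K → Z) → ℝ)
    (hGnn : ∀ k z, 0 ≤ G k z)
    (hPnn : ∀ z, 0 ≤ P z) (hPsum : ∑ z, P z = 1)
    (hW : 0 < ∑ z : Fin K → Z, (∏ k, G k (z k)) * P z)
    (j : Fin K)
    -- the look-ahead function `h j`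
    (h : Z → ℝ)
    (hdef : ∀ zj : Z,
      h zj = (∑ z ∈ Finset.univ.filter (fun z : Fin K → Z => z j = zj),
                (∏ k ∈ Finset.univ.filter (fun k => j < k), G k (z k)) * P z) /
             (∑ z ∈ Finset.univ.filter (fun z : Fin K → Z => z j = zj), P z))
    -- Markov property of `P`: the conditional expectation of the future potentials
    -- given the whole prefix only depends on the state at time `j`
    (hMarkov : ∀ x : Fin K → Z,
      0 < ∑ z ∈ Finset.univ.filter (fun z : Fin K → Z => ∀ k, k ≤ j → z k = x k), P z →
      (∑ z ∈ Finset.univ.filter (fun z : Fin K → Z => ∀ k, k ≤ j → z k = x k),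
          (∏ k ∈ Finset.univ.filter (fun k => j < k), G k (z k)) * P z) /
        (∑ z ∈ Finset.univ.filter (fun z : Fin K → Z => ∀ k, k ≤ j → z k = x k), P z)
        = h (x j)) :
    ∃ c : ℝ, 0 < c ∧ ∀ x : Fin K → Z,
      0 < ∑ z ∈ Finset.univ.filter (fun z : Fin K → Z => z j = x j), P z →
      (∑ z ∈ Finset.univ.filter (fun z : Fin K → Z => ∀ k, k ≤ j → z k = x k),
          ((∏ k, G k (z k)) * P z / ∑ z' : Fin K → Z, (∏ k, G k (z' k)) * P z'))
        = c * ((∑ z ∈ Finset.univ.filter (fun z : Fin K → Z => ∀ k, k ≤ j → z k = x k), P z)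
            * (∏ k ∈ Finset.univ.filter (fun k => k ≤ j), G k (x k)) * h (x j)) := by
  refine ⟨1 / (∑ z : Fin K → Z, (∏ k, G k (z k)) * P z), by positivity, ?_⟩
  intro x hx
  set S := Finset.univ.filter (fun z : Fin K → Z => ∀ k, k ≤ j → z k = x k) with hS
  set W := ∑ z : Fin K → Z, (∏ k, G k (z k)) * P z with hWdef
  have hsplit : ∀ z ∈ S, (∏ k, G k (z k)) * P z
      = (∏ k ∈ Finset.univ.filter (fun k => k ≤ j), G k (x k)) *
        ((∏ k ∈ Finset.univ.filter (fun k => j < k), G k (z k)) * P z) := by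
    intro z hz
    have hz' : ∀ k, k ≤ j → z k = x k := by simpa [hS] using hz
    rw [← Finset.prod_filter_mul_prod_filter_not Finset.univ (fun k => k ≤ j)]
    have h1 : ∏ k ∈ Finset.univ.filter (fun k => k ≤ j), G k (z k)
        = ∏ k ∈ Finset.univ.filter (fun k => k ≤ j), G k (x k) :=
      Finset.prod_congr rfl fun k hk => by rw [hz' k (by simpa using hk)]
    have h2 : (Finset.univ.filter (fun k : Fin K => ¬ k ≤ j))
        = Finset.univ.filter (fun k => j < k) := by simp [not_le]
    rw [h1, h2]; ring
  have key : ∑ z ∈ S, (∏ k, G k (z k)) * P z / W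
      = (∏ k ∈ Finset.univ.filter (fun k => k ≤ j), G k (x k)) *
        (∑ z ∈ S, (∏ k ∈ Finset.univ.filter (fun k => j < k), G k (z k)) * P z) / W := by
    rw [← Finset.sum_div, Finset.sum_congr rfl hsplit, ← Finset.mul_sum]
  rw [key]
  rcases eq_or_lt_of_le (Finset.sum_nonneg (fun z _ => hPnn z) : (0:ℝ) ≤ ∑ z ∈ S, P z)
    with hT | hT
  · have hz0 : ∀ z ∈ S, P z = 0 := by
      intro z hz
      have := (Finset.sum_eq_zero_iff_of_nonneg (fun z _ => hPnn z)).mp hT.symm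
      exact this z hz
    have hN : ∑ z ∈ S, (∏ k ∈ Finset.univ.filter (fun k => j < k), G k (z k)) * P z = 0 :=
      Finset.sum_eq_zero fun z hz => by rw [hz0 z hz, mul_zero]
    rw [hN, ← hT]
    ring
  · have hM := hMarkov x hT
    have hN : ∑ z ∈ S, (∏ k ∈ Finset.univ.filter (fun k => j < k), G k (z k)) * P z
        = h (x j) * ∑ z ∈ S, P z := by
      rw [← hM, div_mul_cancel₀]
      exact ne_of_gt hT
    rw [hN]
    ring
end
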